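/- (Price differences require binding transmission constraints.) Let c be an interconnector with source r and sink s, hours T = {0,…,n−1}, a flow τ_{c,·} with τ̲_{c,t} ≤ τ_{c,t} ≤ τ̄_{c,t} for all t and given τ_{c,−1}, ramp rate τ̃_c, and prices π. If (τ, π) satisfies the flow price condition on c, then for every t ∈ T: (i) π_{r,t} < π_{s,t} implies τ_{c,t} = τ̄_{c,t}, or τ_{c,t} − τ_{c,t−1} = τ̃_c, or (t+1 ∈ T and τ_{c,t} − τ_{c,t+1} = τ̃_c); (ii) π_{r,t} > π_{s,t} implies τ_{c,t} = τ̲_{c,t}, or τ_{c,t−1} − τ_{c,t} = τ̃_c, or (t+1 ∈ T and τ_{c,t+1} − τ_{c,t} = τ̃_c). -/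

import Mathlib

/-- The flow in the previous hour: for hour `0` it is the flow `τprev` in the last hour of
the previous day, otherwise the flow in hour `t - 1`. -/
def prevFlow {n : ℕ} (τprev : ℝ) (τ : Fin n → ℝ) (t : Fin n) : ℝ :=
  if _ : (t : ℕ) = 0 then τprev
  else τ ⟨(t : ℕ) - 1, Nat.lt_of_le_of_lt (Nat.sub_le _ _) t.isLt⟩

/-- The term for hour `t + 1`, present only if `t + 1` is still an hour of the day. -/
def nextTerm {n : ℕ} (f : Fin n → ℝ) (t : Fin n) : ℝ :=
  if h : (t : ℕ) + 1 < n then f ⟨(t : ℕ) + 1, h⟩ else 0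

/-!
Stationarity at hour `t` says `π_s - π_r = (μ̄ - μ̲) + (ρ̃ - ρ̰) + (ρ̰ - ρ̃)(t + 1)`.
If `π_r < π_s`, one of the multipliers `μ̄_t`, `ρ̃_t`, `ρ̰_{t+1}` entering with a plus sign
must be positive, and complementary slackness makes its constraint binding. The case
`π_s < π_r` is the same statement for the reversed flow `-τ`, which swaps the roles of the
upper and lower bounds and of the two ramping directions.
-/

theorem eq_of_sub_mul_eq_zero {R : Type*} [Ring R] [NoZeroDivisors R] {a b m : R}
    (h : (a - b) * m = 0) (hm : m ≠ 0) : a = b :=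
  sub_eq_zero.mp ((mul_eq_zero.mp h).resolve_right hm)

section Hours

variable {n : ℕ}

theorem prevFlow_succ (τprev : ℝ) (τ : Fin n → ℝ) {t : ℕ} (h : t + 1 < n) :
    prevFlow τprev τ ⟨t + 1, h⟩ = τ ⟨t, by omega⟩ := by
  simp [prevFlow]

theorem prevFlow_neg (τprev : ℝ) (τ : Fin n → ℝ) (t : Fin n) :
    prevFlow (-τprev) (-τ) t = -prevFlow τprev τ t := by
  unfold prevFlow
  split_ifs <;> rfl

theorem nextTerm_neg (f : Fin n → ℝ) (t : Fin n) :
    nextTerm (fun v => -f v) t = -nextTerm f t := by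
  unfold nextTerm
  split_ifs <;> simp

theorem nextTerm_mono {f g : Fin n → ℝ} (hfg : ∀ v, f v ≤ g v) (t : Fin n) :
    nextTerm f t ≤ nextTerm g t := by
  unfold nextTerm
  split_ifs
  exacts [hfg _, le_rfl]

theorem nextTerm_pos_iff (f : Fin n → ℝ) (t : Fin n) :
    0 < nextTerm f t ↔ ∃ h : (t : ℕ) + 1 < n, 0 < f ⟨(t : ℕ) + 1, h⟩ := by
  unfold nextTerm
  split_ifs with h <;> simp [h]

end Hours

/-- `μbar, μlow, ρt, ρb` are the multipliers `μ̄, μ̲, ρ̃, ρ̰`; `πr`, `πs` are the prices of the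
source and sink areas. -/
def FlowPriceCondition {n : ℕ} (τlo τhi : Fin n → ℝ) (τtil τprev : ℝ)
    (τ πr πs : Fin n → ℝ) : Prop :=
  ∃ μbar μlow ρt ρb : Fin n → ℝ,
    (∀ u, 0 ≤ μbar u ∧ 0 ≤ μlow u ∧ 0 ≤ ρt u ∧ 0 ≤ ρb u) ∧
    ∀ u : Fin n,
      (μbar u - μlow u) + (ρt u - ρb u)
          + nextTerm (fun v => ρb v - ρt v) u + πr u - πs u = 0 ∧
        (τ u - τhi u) * μbar u = 0 ∧
        (τlo u - τ u) * μlow u = 0 ∧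
        (τ u - prevFlow τprev τ u - τtil) * ρt u = 0 ∧
        (prevFlow τprev τ u - τ u - τtil) * ρb u = 0

namespace FlowPriceCondition

variable {n : ℕ} {τlo τhi : Fin n → ℝ} {τtil τprev : ℝ} {τ πr πs : Fin n → ℝ}

theorem neg (h : FlowPriceCondition τlo τhi τtil τprev τ πr πs) :
    FlowPriceCondition (-τhi) (-τlo) τtil (-τprev) (-τ) πs πr := by
  obtain ⟨μbar, μlow, ρt, ρb, hnn, hcond⟩ := h
  refine ⟨μlow, μbar, ρb, ρt, fun u => ?_, fun u => ?_⟩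
  · obtain ⟨h₁, h₂, h₃, h₄⟩ := hnn u
    exact ⟨h₂, h₁, h₄, h₃⟩
  · obtain ⟨hstat, hhi, hlo, hup, hdown⟩ := hcond u
    have hnext := nextTerm_neg (fun v => ρb v - ρt v) u
    simp only [neg_sub] at hnext
    simp only [Pi.neg_apply, prevFlow_neg, hnext]
    exact ⟨by linarith, by linear_combination hlo, by linear_combination hhi,
      by linear_combination hdown, by linear_combination hup⟩

theorem binding_of_lt (h : FlowPriceCondition τlo τhi τtil τprev τ πr πs) (t : Fin n)
    (hlt : πr t < πs t) :
    τ t = τhi t ∨ τ t - prevFlow τprev τ t = τtil ∨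
      ∃ h : (t : ℕ) + 1 < n, τ t - τ ⟨(t : ℕ) + 1, h⟩ = τtil := by
  obtain ⟨μbar, μlow, ρt, ρb, hnn, hcond⟩ := h
  obtain ⟨hstat, hhi, -, hup, -⟩ := hcond t
  have hnext : nextTerm (fun v => ρb v - ρt v) t ≤ nextTerm ρb t :=
    nextTerm_mono (fun v => sub_le_self _ (hnn v).2.2.1) t
  have hpos : 0 < μbar t ∨ 0 < ρt t ∨ 0 < nextTerm ρb t := by
    by_contra! hnonpos
    linarith [(hnn t).2.1, (hnn t).2.2.2]
  rcases hpos with hμ | hρ | hρnext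
  · exact .inl (eq_of_sub_mul_eq_zero hhi hμ.ne')
  · exact .inr (.inl (eq_of_sub_mul_eq_zero hup hρ.ne'))
  · obtain ⟨hsucc, hρ⟩ := (nextTerm_pos_iff ρb t).mp hρnext
    obtain ⟨-, -, -, -, hdown⟩ := hcond ⟨(t : ℕ) + 1, hsucc⟩
    rw [prevFlow_succ] at hdown
    exact .inr (.inr ⟨hsucc, eq_of_sub_mul_eq_zero hdown hρ.ne'⟩)

end FlowPriceCondition

theorem price_difference_requires_binding_constraint_general {n : ℕ}
    (τlo τhi : Fin n → ℝ) (τtil : ℝ) (τprev : ℝ)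
    (τ : Fin n → ℝ)
    (πr πs : Fin n → ℝ)
    (hfpc : ∃ μbar μlow ρt ρb : Fin n → ℝ,
      (∀ u, 0 ≤ μbar u ∧ 0 ≤ μlow u ∧ 0 ≤ ρt u ∧ 0 ≤ ρb u) ∧
      ∀ u : Fin n,
        (μbar u - μlow u) + (ρt u - ρb u)
            + nextTerm (fun v => ρb v - ρt v) u + πr u - πs u = 0 ∧
          (τ u - τhi u) * μbar u = 0 ∧
          (τlo u - τ u) * μlow u = 0 ∧
          (τ u - prevFlow τprev τ u - τtil) * ρt u = 0 ∧
          (prevFlow τprev τ u - τ u - τtil) * ρb u = 0) :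
    ∀ t : Fin n,
      (πr t < πs t →
        τ t = τhi t ∨ τ t - prevFlow τprev τ t = τtil ∨
          ∃ h : (t : ℕ) + 1 < n, τ t - τ ⟨(t : ℕ) + 1, h⟩ = τtil) ∧
      (πs t < πr t →
        τ t = τlo t ∨ prevFlow τprev τ t - τ t = τtil ∨
          ∃ h : (t : ℕ) + 1 < n, τ ⟨(t : ℕ) + 1, h⟩ - τ t = τtil) := by
  have hcond : FlowPriceCondition τlo τhi τtil τprev τ πr πs := hfpc
  refine fun t => ⟨hcond.binding_of_lt t, fun hlt => ?_⟩
  simpa only [Pi.neg_apply, prevFlow_neg, neg_inj, neg_sub_neg] using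
    hcond.neg.binding_of_lt t hlt

/-- price differences require binding transmission constraints. If the
flow price condition holds on an interconnector, then a price difference between the two
areas in some hour implies that a corresponding ATC bound or a ramping constraint is
binding. -/
theorem price_difference_requires_binding_constraint {n : ℕ}
    (τlo τhi : Fin n → ℝ) (τtil : ℝ) (τprev : ℝ)
    (τ : Fin n → ℝ) (hτ : ∀ t, τlo t ≤ τ t ∧ τ t ≤ τhi t)
    (πr πs : Fin n → ℝ)
    (hfpc : ∃ μbar μlow ρt ρb : Fin n → ℝ,
      (∀ u, 0 ≤ μbar u ∧ 0 ≤ μlow u ∧ 0 ≤ ρt u ∧ 0 ≤ ρb u) ∧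
      ∀ u : Fin n,
        (μbar u - μlow u) + (ρt u - ρb u)
            + nextTerm (fun v => ρb v - ρt v) u + πr u - πs u = 0 ∧
          (τ u - τhi u) * μbar u = 0 ∧
          (τlo u - τ u) * μlow u = 0 ∧
          (τ u - prevFlow τprev τ u - τtil) * ρt u = 0 ∧
          (prevFlow τprev τ u - τ u - τtil) * ρb u = 0) :
    ∀ t : Fin n,
      (πr t < πs t →
        τ t = τhi t ∨ τ t - prevFlow τprev τ t = τtil ∨
          ∃ h : (t : ℕ) + 1 < n, τ t - τ ⟨(t : ℕ) + 1, h⟩ = τtil) ∧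
      (πs t < πr t →
        τ t = τlo t ∨ prevFlow τprev τ t - τ t = τtil ∨
          ∃ h : (t : ℕ) + 1 < n, τ ⟨(t : ℕ) + 1, h⟩ - τ t = τtil) :=
  price_difference_requires_binding_constraint_general τlo τhi τtil τprev τ πr πs hfpc
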